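/- SEP₁ ≡_W C_{#≤2} ≤_W EC₁ ≡_W SORT: the restricted separation problem is continuously Weihrauch equivalent to closed choice on Cantor space restricted to sets with at most two elements, this is continuously Weihrauch reducible to EC₁, and EC₁ is continuously Weihrauch equivalent to the sorting problem. -/

import Mathlib

open Filter Topology

abbrev Baire : Type := ℕ → ℕ

/-- The pairing `⟨p,q⟩(2n) = p(n)`, `⟨p,q⟩(2n+1) = q(n)`. -/
def pairB (p q : Baire) : Baire := fun n => if n % 2 = 0 then p (n / 2) else q (n / 2)

/-- A problem: a partial multivalued function on Baire space. -/
structure Problem where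
  dom : Set Baire
  sol : Baire → Set Baire

/-- Continuous Weihrauch reducibility. -/
def WRed (f g : Problem) : Prop :=
  ∃ (Kd Hd : Set Baire) (K H : Baire → Baire),
    ContinuousOn K Kd ∧ ContinuousOn H Hd ∧
      ∀ p ∈ f.dom, p ∈ Kd ∧ K p ∈ g.dom ∧
        ∀ q ∈ g.sol (K p), pairB p q ∈ Hd ∧ H (pairB p q) ∈ f.sol p

/-- Strong continuous Weihrauch reducibility. -/
def SWRed (f g : Problem) : Prop :=
  ∃ (Kd Hd : Set Baire) (K H : Baire → Baire),
    ContinuousOn K Kd ∧ ContinuousOn H Hd ∧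
      ∀ p ∈ f.dom, p ∈ Kd ∧ K p ∈ g.dom ∧
        ∀ q ∈ g.sol (K p), q ∈ Hd ∧ H q ∈ f.sol p

def WEquiv (f g : Problem) : Prop := WRed f g ∧ WRed g f
def SWEquiv (f g : Problem) : Prop := SWRed f g ∧ SWRed g f
def WLt (f g : Problem) : Prop := WRed f g ∧ ¬ WRed g f

/-- `range(p-1)`. -/
def rangeM (p : Baire) : Set ℕ := {n | ∃ i, p i = n + 1}

/-- Characteristic function of a set of naturals. -/
noncomputable def chi (A : Set ℕ) : Baire := A.indicator fun _ => 1

noncomputable def EC : Problem where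
  dom := Set.univ
  sol := fun p => {chi (rangeM p)}

noncomputable def EC1 : Problem where
  dom := {p | ((rangeM p)ᶜ).encard ≤ 1}
  sol := fun p => {chi (rangeM p)}

def pfst (r : Baire) : Baire := fun n => r (2 * n)
def psnd (r : Baire) : Baire := fun n => r (2 * n + 1)

noncomputable def SEP : Problem where
  dom := {r | rangeM (pfst r) ∩ rangeM (psnd r) = ∅}
  sol := fun r =>
    {s | ∃ A : Set ℕ, s = chi A ∧ rangeM (pfst r) ⊆ A ∧ A ⊆ (rangeM (psnd r))ᶜ}

noncomputable def SEP1 : Problem where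
  dom := {r | rangeM (pfst r) ∩ rangeM (psnd r) = ∅ ∧
    ((rangeM (pfst r) ∪ rangeM (psnd r))ᶜ).encard ≤ 1}
  sol := SEP.sol

/- rationals -/
def ratEnum (i : ℕ) : ℚ :=
  ((i.unpair.1 : ℚ) - (i.unpair.2.unpair.1 : ℚ)) / ((i.unpair.2.unpair.2 : ℚ) + 1)

def rhoCauchy (p : Baire) (x : ℝ) : Prop :=
  ∀ n, |(ratEnum (p n) : ℝ) - x| ≤ (2 : ℝ) ^ (-(n : ℤ))

def rhoNaive (p : Baire) (x : ℝ) : Prop :=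
  Tendsto (fun n => ((ratEnum (p n) : ℝ))) atTop (nhds x)

def rhoLt (p : Baire) (x : ℝ) : Prop := rangeM p = {n | (ratEnum n : ℝ) < x}
def rhoGt (p : Baire) (x : ℝ) : Prop := rangeM p = {n | x < (ratEnum n : ℝ)}

def rhoCfLt (p : Baire) (x : ℝ) : Prop :=
  (∀ n, p n ≤ 1) ∧ ∀ n, (p n = 1 ↔ (ratEnum n : ℝ) < x)
def rhoCfGt (p : Baire) (x : ℝ) : Prop :=
  (∀ n, p n ≤ 1) ∧ ∀ n, (p n = 1 ↔ x < (ratEnum n : ℝ))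

noncomputable def cfTail : List ℕ → ℝ
  | [] => 0
  | b :: l => 1 / ((b : ℝ) + cfTail l)

noncomputable def cfApprox (p : Baire) (k : ℕ) : ℝ :=
  ((Denumerable.ofNat ℤ (p 0) : ℤ) : ℝ) + cfTail ((List.range k).map fun i => p (i + 1))

def rhoCf (p : Baire) (x : ℝ) : Prop :=
  ((∀ i, 1 ≤ i → 1 ≤ p i) ∧ Tendsto (cfApprox p) atTop (nhds x)) ∨
    (∃ k, 1 ≤ k ∧ p k = 0 ∧ (∀ i, 1 ≤ i → i < k → 1 ≤ p i) ∧
      (2 ≤ k → 2 ≤ p (k - 1)) ∧ x = cfApprox p (k - 1))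

def rhoDec (p : Baire) (x : ℝ) : Prop :=
  (∀ n, 1 ≤ n → p n ≤ 9) ∧
    x = ((Denumerable.ofNat ℤ (p 0) : ℤ) : ℝ) + ∑' n : ℕ, (p (n + 1) : ℝ) / 10 ^ (n + 1)

/-- The implication problem between two representations of ℝ. -/
def implProblem (d1 d2 : Baire → ℝ → Prop) : Problem where
  dom := {p | ∃ x, d1 p x}
  sol := fun p => {q | ∃ x, d1 p x ∧ d2 q x}

/- trees / WKL / choice on Cantor space -/
def wordCode : List Bool → ℕ
  | [] => 0
  | b :: w => 2 * wordCode w + (if b then 2 else 1)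

def prefixList (x : Baire) (k : ℕ) : List Bool := (List.range k).map fun i => decide (x i = 1)

def isTreeCode (t : Baire) : Prop :=
  (∀ n, t n ≤ 1) ∧
    ∀ w v : List Bool, w <+: v → t (wordCode v) = 1 → t (wordCode w) = 1

def WKL : Problem where
  dom := {t | isTreeCode t ∧ {w : List Bool | t (wordCode w) = 1}.Infinite}
  sol := fun t => {x | (∀ n, x n ≤ 1) ∧ ∀ k, t (wordCode (prefixList x k)) = 1}

def Ap (p : Baire) : Set Baire :=
  {x | (∀ n, x n ≤ 1) ∧ ∀ k, wordCode (prefixList x k) ∉ rangeM p}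

def CCantor : Problem where
  dom := {p | (Ap p).Nonempty}
  sol := Ap

def Cle2 : Problem where
  dom := {p | (Ap p).Nonempty ∧ (Ap p).encard ≤ 2}
  sol := Ap

/- limit and parallelization -/
def projCount (r : Baire) (n : ℕ) : Baire := fun k => r (Nat.pair n k)

def limP : Problem where
  dom := {r | ∃ q : Baire, ∀ k, Tendsto (fun n => projCount r n k) atTop (nhds (q k))}
  sol := fun r => {q | ∀ k, Tendsto (fun n => projCount r n k) atTop (nhds (q k))}

def parallel (f : Problem) : Problem where
  dom := {r | ∀ n, projCount r n ∈ f.dom}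
  sol := fun r => {s | ∀ n, projCount s n ∈ f.sol (projCount r n)}

def MCT : Problem where
  dom := {r | ∃ xs : ℕ → ℝ, (∀ n, rhoCauchy (projCount r n) (xs n)) ∧
    Monotone xs ∧ BddAbove (Set.range xs)}
  sol := fun r => {q | ∃ xs : ℕ → ℝ, (∀ n, rhoCauchy (projCount r n) (xs n)) ∧
    Monotone xs ∧ BddAbove (Set.range xs) ∧ rhoCauchy q (⨆ n, xs n)}

/- SORT and RAT -/
open Classical in
noncomputable def sortOut (p : Baire) : Baire := fun k =>
  if {i | p i = 0}.Infinite then 0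
  else if k < {i | p i = 0}.ncard then 0 else 1

noncomputable def SORT : Problem where
  dom := {p | ∀ n, p n ≤ 1}
  sol := fun p => {sortOut p}

def znk (n : ℕ) : Baire := fun k => if k < n then 0 else 1

def RAT : Problem where
  dom := {p | ∃ x, rhoCauchy p x}
  sol := fun p => {s | ∃ x, rhoCauchy p x ∧
    ((∃ n, x = (ratEnum n : ℝ) ∧ s = znk n) ∨
      ((∀ r : ℚ, x ≠ (r : ℝ)) ∧ s = fun _ => 0))}

/- omniscience principles -/
def projFin (m i : ℕ) (r : Baire) : Baire := fun k => r (m * k + i - 1)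
def isZeroSeq (p : Baire) : Prop := ∀ k, p k = 0
def constSeq (i : ℕ) : Baire := fun _ => i

noncomputable def LPOn (n : ℕ) : Problem where
  dom := Set.univ
  sol := fun r => {constSeq ({i | 1 ≤ i ∧ i ≤ n ∧ isZeroSeq (projFin n i r)}.ncard)}

def LLPOn (n : ℕ) : Problem where
  dom := {r | {i | 1 ≤ i ∧ i ≤ n ∧ ¬ isZeroSeq (projFin n i r)}.encard ≤ 1}
  sol := fun r => {s | ∃ i, 1 ≤ i ∧ i ≤ n ∧ isZeroSeq (projFin n i r) ∧ s = constSeq i}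

def MLPOn (n : ℕ) : Problem where
  dom := {r | ∃ i, 1 ≤ i ∧ i ≤ n ∧ isZeroSeq (projFin n i r)}
  sol := fun r => {s | ∃ i, 1 ≤ i ∧ i ≤ n ∧ isZeroSeq (projFin n i r) ∧ s = constSeq i}

def LPO : Problem where
  dom := Set.univ
  sol := fun p => {s | (isZeroSeq p ∧ s = constSeq 1) ∨ (¬ isZeroSeq p ∧ s = constSeq 0)}

/- choice problems on ℕ etc. -/
def Cfin (n : ℕ) : Problem where
  dom := {p | ∃ i, i < n ∧ i ∉ rangeM p}
  sol := fun p => {s | ∃ i, i < n ∧ i ∉ rangeM p ∧ s = constSeq i}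

def ACCfin (n : ℕ) : Problem where
  dom := {p | (∃ i, i < n ∧ i ∉ rangeM p) ∧ ({i | i < n} ∩ rangeM p).encard ≤ 1}
  sol := (Cfin n).sol

def CNat : Problem where
  dom := {p | ∃ i, i ∉ rangeM p}
  sol := fun p => {s | ∃ i, i ∉ rangeM p ∧ s = constSeq i}

/- differentiation -/
instance : Countable (AddMonoidAlgebra ℚ ℕ) :=
  AddMonoidAlgebra.coeff_injective.countable

instance : Countable (Polynomial ℚ) :=
  Polynomial.toFinsupp_injective.countable

noncomputable def polyEnum : ℕ → Polynomial ℚ :=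
  (exists_surjective_nat (Polynomial ℚ)).choose

noncomputable def polyFun (k : ℕ) : C(Set.Icc (0:ℝ) 1, ℝ) :=
  ⟨fun x => ((polyEnum k).map (algebraMap ℚ ℝ)).eval (x : ℝ),
   (((polyEnum k).map (algebraMap ℚ ℝ)).continuous).comp continuous_subtype_val⟩

noncomputable def deltaC (p : Baire) (f : C(Set.Icc (0:ℝ) 1, ℝ)) : Prop :=
  ∀ n, ‖f - polyFun (p n)‖ ≤ (2 : ℝ) ^ (-(n : ℤ))

def IsDerivOn (f g : C(Set.Icc (0:ℝ) 1, ℝ)) : Prop :=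
  ∀ x : Set.Icc (0:ℝ) 1,
    HasDerivWithinAt (Set.IccExtend (by norm_num : (0:ℝ) ≤ 1) f) (g x) (Set.Icc 0 1) (x : ℝ)

noncomputable def diffP : Problem where
  dom := {p | ∃ f g, deltaC p f ∧ IsDerivOn f g}
  sol := fun p => {q | ∃ f g, deltaC p f ∧ IsDerivOn f g ∧ deltaC q g}

/-!
`SEP₁ ≤ C_{#≤2}`: the words putting some `n` on the wrong side of `P`, `Q` are enumerable, and
the paths avoiding them are exactly the separators; with at most one point outside `P ∪ Q`
there are at most two.

`C_{#≤2} ≤ SEP₁`: a node of the binary tree dies once all sequences through it have met an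
enumerated word; by compactness this happens at some finite stage iff no element of `A_p` passes
through the node. Separate the nodes whose left child dies strictly first from those whose right
child dies no later. A node in neither set has two extendible children, and as `|A_p| ≤ 2` there
is at most one such node. At an extendible node with a single extendible child the separator is
forced to pick that child, so following it from the root yields an element of `A_p`.

`SEP₁ ≤ EC₁`: `EC₁` decides `P ∪ Q`, and for `n ∈ P ∪ Q` the first enumeration of `n` tells the
side.

`EC₁ ≡ SORT`: if `ℕ \ A ⊆ {m}`, the enumerable initial segment `{n | [0, n] ⊆ A}` is `[0, m)`
(or `ℕ`), and `SORT` of a sequence with one zero per element of it reveals `m`. Conversely, for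
`p` with finitely many zeros, enumerate all pairs `⟨j, t⟩` except the one where `j` is the final
number of zeros and `t` the stage where it is reached: the missing pair certifies the count.
-/

open Set PiNat

lemma pfst_pairB (p q : Baire) : pfst (pairB p q) = p := by
  funext n
  simp [pfst, pairB]

lemma psnd_pairB (p q : Baire) : psnd (pairB p q) = q := by
  funext n
  simp [psnd, pairB, Nat.add_mod, Nat.add_div]

lemma rangeM_eq_union (r : Baire) : rangeM r = rangeM (pfst r) ∪ rangeM (psnd r) := by
  ext n
  constructor
  · rintro ⟨i, hi⟩
    obtain ⟨j, rfl | rfl⟩ := Nat.even_or_odd' i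
    exacts [Or.inl ⟨j, hi⟩, Or.inr ⟨j, hi⟩]
  · rintro (⟨i, hi⟩ | ⟨i, hi⟩)
    exacts [⟨2 * i, hi⟩, ⟨2 * i + 1, hi⟩]

lemma chi_of_mem {A : Set ℕ} {n : ℕ} (h : n ∈ A) : chi A n = 1 := indicator_of_mem h _

lemma chi_of_notMem {A : Set ℕ} {n : ℕ} (h : n ∉ A) : chi A n = 0 := indicator_of_notMem h _

lemma chi_eq_one_iff {A : Set ℕ} {n : ℕ} : chi A n = 1 ↔ n ∈ A := by
  by_cases h : n ∈ A <;> simp [h, chi_of_mem, chi_of_notMem]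

lemma chi_eq_zero_iff {A : Set ℕ} {n : ℕ} : chi A n = 0 ↔ n ∉ A := by
  by_cases h : n ∈ A <;> simp [h, chi_of_mem, chi_of_notMem]

lemma chi_le_one (A : Set ℕ) (n : ℕ) : chi A n ≤ 1 := by
  by_cases h : n ∈ A <;> simp [h, chi_of_mem, chi_of_notMem]

lemma eq_chi_of_le_one {x : Baire} (hx : ∀ n, x n ≤ 1) : x = chi {n | x n = 1} := by
  funext n
  by_cases h : x n = 1
  · rw [chi_of_mem (show n ∈ {n | x n = 1} from h), h]
  · rw [chi_of_notMem (show n ∉ {n | x n = 1} from h)]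
    have := hx n
    omega

lemma continuousOn_of_forall_cylinder {H : Baire → Baire} {S : Set Baire}
    (h : ∀ x ∈ S, ∀ k, ∃ N, ∀ y ∈ S, y ∈ cylinder x N → H y k = H x k) :
    ContinuousOn H S := by
  intro x hx
  refine continuousWithinAt_pi.2 fun k => ?_
  obtain ⟨N, hN⟩ := h x hx k
  have hcyl : cylinder x N ∈ 𝓝[S] x :=
    mem_nhdsWithin_of_mem_nhds ((isOpen_cylinder _ x N).mem_nhds (self_mem_cylinder x N))
  refine tendsto_const_nhds.congr' ?_
  filter_upwards [hcyl, self_mem_nhdsWithin] with y hyN hyS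
  exact (hN y hyS hyN).symm

lemma continuous_of_forall_cylinder {H : Baire → Baire}
    (h : ∀ x k, ∃ N, ∀ y ∈ cylinder x N, H y k = H x k) : Continuous H :=
  continuousOn_univ.1 <| continuousOn_of_forall_cylinder fun x _ k =>
    (h x k).imp fun _ hN y _ => hN y

lemma continuous_pfst : Continuous pfst :=
  continuous_pi fun n => continuous_apply (2 * n)

lemma continuous_psnd : Continuous psnd :=
  continuous_pi fun n => continuous_apply (2 * n + 1)

lemma pfst_mem_cylinder {r r' : Baire} {t : ℕ} (h : r' ∈ cylinder r (2 * t)) :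
    pfst r' ∈ cylinder (pfst r) t :=
  fun i hi => h (2 * i) (by omega)

lemma continuous_pairB : Continuous fun pq : Baire × Baire => pairB pq.1 pq.2 := by
  refine continuous_pi fun n => ?_
  unfold pairB
  split
  exacts [(continuous_apply _).comp continuous_fst, (continuous_apply _).comp continuous_snd]

lemma WRed.trans {f g h : Problem} (hfg : WRed f g) (hgh : WRed g h) : WRed f h := by
  obtain ⟨Kd₁, Hd₁, K₁, H₁, hK₁, hH₁, hfg⟩ := hfg
  obtain ⟨Kd₂, Hd₂, K₂, H₂, hK₂, hH₂, hgh⟩ := hgh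
  let inner : Baire → Baire := fun r => pairB (K₁ (pfst r)) (psnd r)
  let outer : Baire → Baire := fun r => pairB (pfst r) (H₂ (inner r))
  let Hd : Set Baire := {r | pfst r ∈ Kd₁ ∧ inner r ∈ Hd₂ ∧ outer r ∈ Hd₁}
  refine ⟨Kd₁ ∩ K₁ ⁻¹' Kd₂, Hd, K₂ ∘ K₁, H₁ ∘ outer,
    hK₂.comp (hK₁.mono inter_subset_left) fun _ hx => hx.2, ?_, ?_⟩
  · have hinner : ContinuousOn inner Hd := continuous_pairB.comp_continuousOn
      ((hK₁.comp continuous_pfst.continuousOn fun _ hr => hr.1).prodMk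
        continuous_psnd.continuousOn)
    have houter : ContinuousOn outer Hd := continuous_pairB.comp_continuousOn
      (continuous_pfst.continuousOn.prodMk (hH₂.comp hinner fun _ hr => hr.2.1))
    exact hH₁.comp houter fun _ hr => hr.2.2
  · intro p hp
    obtain ⟨hpK, hKp, hsol₁⟩ := hfg p hp
    obtain ⟨hKK, hKKp, hsol₂⟩ := hgh (K₁ p) hKp
    refine ⟨⟨hpK, hKK⟩, hKKp, fun q hq => ?_⟩
    obtain ⟨hH₂d, hH₂s⟩ := hsol₂ q hq
    obtain ⟨hH₁d, hH₁s⟩ := hsol₁ _ hH₂s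
    simp only [Hd, inner, outer, Function.comp_apply, mem_ofPred_eq, pfst_pairB, psnd_pairB]
    exact ⟨⟨hpK, hH₂d, hH₁d⟩, hH₁s⟩

open Classical in
noncomputable def enumOf (C : ℕ → ℕ → Prop) : Baire :=
  fun m => if C m.unpair.1 m.unpair.2 then m.unpair.1 + 1 else 0

lemma rangeM_enumOf (C : ℕ → ℕ → Prop) : rangeM (enumOf C) = {a | ∃ t, C a t} := by
  ext a
  simp only [rangeM, enumOf, mem_ofPred_eq]
  constructor
  · rintro ⟨m, hm⟩
    split_ifs at hm with h
    · exact ⟨m.unpair.2, by rwa [← Nat.succ_injective hm]⟩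
  · rintro ⟨t, ht⟩
    exact ⟨Nat.pair a t, by simp [ht]⟩

lemma continuous_enumOf {C : Baire → ℕ → ℕ → Prop}
    (hC : ∀ a t, ∃ N, ∀ p, ∀ p' ∈ cylinder p N, (C p' a t ↔ C p a t)) :
    Continuous fun p => enumOf (C p) :=
  continuous_of_forall_cylinder fun p m => (hC m.unpair.1 m.unpair.2).imp fun _ hN p' hp' => by
    classical exact if_congr (hN p p' hp') rfl rfl

/-! ### Counting zeros -/

lemma sortOut_eq_zero_iff (p : Baire) (k : ℕ) :
    sortOut p k = 0 ↔ (k : ℕ∞) < {i | p i = 0}.encard := by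
  unfold sortOut
  by_cases hinf : {i | p i = 0}.Infinite
  · simp [hinf]
  · rw [not_infinite] at hinf
    rw [← hinf.cast_ncard_eq, Nat.cast_lt]
    simp [hinf]

lemma sortOut_le_one (p : Baire) (k : ℕ) : sortOut p k ≤ 1 := by
  unfold sortOut
  split_ifs <;> omega

lemma IsLowerSet.mem_iff_lt_encard {S : Set ℕ} (hS : IsLowerSet S) (k : ℕ) :
    k ∈ S ↔ (k : ℕ∞) < S.encard := by
  constructor
  · intro hk
    have hsub : (Finset.range (k + 1) : Set ℕ) ⊆ S := fun i hi =>
      hS (Nat.lt_succ_iff.1 (Finset.mem_coe.1 hi |> Finset.mem_range.1)) hk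
    calc (k : ℕ∞) < (k + 1 : ℕ) := by norm_cast; omega
      _ = (Finset.range (k + 1) : Set ℕ).encard := by
        rw [encard_coe_eq_coe_finsetCard, Finset.card_range]
      _ ≤ S.encard := encard_le_encard hsub
  · intro hlt
    by_contra hk
    have hsub : S ⊆ (Finset.range k : Set ℕ) := fun i hi => by
      by_contra hik
      exact hk (hS (by simpa using hik) hi)
    have := encard_le_encard hsub
    rw [encard_coe_eq_coe_finsetCard, Finset.card_range] at this
    exact absurd hlt this.not_gt

lemma lt_encard_iff_exists_lt_count (P : ℕ → Prop) [DecidablePred P] (k : ℕ) :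
    (k : ℕ∞) < {i | P i}.encard ↔ ∃ t, k < Nat.count P t := by
  constructor
  · intro hk
    obtain ⟨T, hTP, hTcard⟩ := exists_subset_encard_eq (Order.add_one_le_of_lt hk)
    obtain ⟨b, hb⟩ := (finite_of_encard_eq_coe (k := k + 1) (by simpa using hTcard)).bddAbove
    refine ⟨b + 1, ?_⟩
    have hsub : T ⊆ ({i ∈ Finset.range (b + 1) | P i} : Finset ℕ) := fun i hi => by
      simpa [Nat.lt_succ_iff] using ⟨hb hi, hTP hi⟩
    have := encard_le_encard hsub
    rw [hTcard, encard_coe_eq_coe_finsetCard, ← Nat.count_eq_card_filter_range] at this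
    have : k + 1 ≤ Nat.count P (b + 1) := by exact_mod_cast this
    omega
  · rintro ⟨t, ht⟩
    calc (k : ℕ∞) < Nat.count P t := by exact_mod_cast ht
      _ = (({i ∈ Finset.range t | P i} : Finset ℕ) : Set ℕ).encard := by
        rw [encard_coe_eq_coe_finsetCard, Nat.count_eq_card_filter_range]
      _ ≤ {i | P i}.encard := encard_le_encard fun i hi => (by simpa using hi : i < t ∧ P i).2

abbrev zeroCount (p : Baire) : ℕ → ℕ := Nat.count fun i => p i = 0

open Classical in
lemma sortOut_eq_ite_count (p : Baire) :
    sortOut p = fun k => if ∃ t, k < zeroCount p t then 0 else 1 := by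
  funext k
  split_ifs with h
  · rwa [sortOut_eq_zero_iff, lt_encard_iff_exists_lt_count]
  · rw [← lt_encard_iff_exists_lt_count, ← sortOut_eq_zero_iff] at h
    have := sortOut_le_one p k
    omega

/-! ### `EC₁ ≡ SORT` -/

open Classical in
noncomputable def firstStages (C : ℕ → ℕ → Prop) : Baire :=
  fun m => if C m.unpair.1 (m.unpair.2 + 1) ∧ ¬ C m.unpair.1 m.unpair.2 then 0 else 1

lemma firstStages_le_one (C : ℕ → ℕ → Prop) (m : ℕ) : firstStages C m ≤ 1 := by
  unfold firstStages
  split_ifs <;> omega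

lemma firstStages_eq_zero_iff (C : ℕ → ℕ → Prop) (m : ℕ) :
    firstStages C m = 0 ↔ C m.unpair.1 (m.unpair.2 + 1) ∧ ¬ C m.unpair.1 m.unpair.2 := by
  unfold firstStages
  split_ifs with h <;> simp [h]

lemma encard_zeros_firstStages {C : ℕ → ℕ → Prop} (hC : ∀ a, Monotone (C a))
    (hC₀ : ∀ a, ¬ C a 0) : {m | firstStages C m = 0}.encard = {a | ∃ t, C a t}.encard := by
  classical
  have hinj : InjOn (fun m => m.unpair.1) {m | firstStages C m = 0} := by
    intro m hm m' hm' ha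
    simp only [mem_ofPred_eq, firstStages_eq_zero_iff] at hm hm' ha
    have ht : m.unpair.2 = m'.unpair.2 := by
      by_contra hne
      rcases Nat.lt_or_gt_of_ne hne with h | h
      · exact hm'.2 (ha ▸ hC _ (show m.unpair.2 + 1 ≤ m'.unpair.2 by omega) hm.1)
      · exact hm.2 (ha ▸ hC _ (show m'.unpair.2 + 1 ≤ m.unpair.2 by omega) hm'.1)
    rw [← Nat.pair_unpair m, ← Nat.pair_unpair m', ha, ht]
  rw [← hinj.encard_image]
  congr 1
  ext a
  simp only [mem_image, mem_ofPred_eq, firstStages_eq_zero_iff]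
  constructor
  · rintro ⟨m, ⟨h, -⟩, rfl⟩
    exact ⟨_, h⟩
  · intro h
    have hpos : Nat.find h ≠ 0 := fun h0 => hC₀ a (h0 ▸ Nat.find_spec h)
    refine ⟨Nat.pair a (Nat.find h - 1), ?_, by simp⟩
    rw [Nat.unpair_pair, Nat.sub_add_cancel (Nat.pos_of_ne_zero hpos)]
    exact ⟨Nat.find_spec h, Nat.find_min h (by omega)⟩

lemma sortOut_firstStages {C : ℕ → ℕ → Prop} (hC : ∀ a, Monotone (C a))
    (hC₀ : ∀ a, ¬ C a 0) (hS : IsLowerSet {a | ∃ t, C a t}) (k : ℕ) :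
    sortOut (firstStages C) k = 0 ↔ ∃ t, C k t := by
  rw [sortOut_eq_zero_iff, encard_zeros_firstStages hC hC₀, ← hS.mem_iff_lt_encard]
  rfl

def IicEnumeratedBefore (p : Baire) (a t : ℕ) : Prop := ∀ j ≤ a, ∃ i < t, p i = j + 1

lemma iicEnumeratedBefore_mono (p : Baire) (a : ℕ) : Monotone (IicEnumeratedBefore p a) :=
  fun _ _ hst h j hj => (h j hj).imp fun _ hi => ⟨hi.1.trans_le hst, hi.2⟩

lemma not_iicEnumeratedBefore_zero (p : Baire) (a : ℕ) : ¬ IicEnumeratedBefore p a 0 :=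
  fun h => by simpa using h a le_rfl

lemma iicEnumeratedBefore_congr {p p' : Baire} {a t : ℕ} (h : p' ∈ cylinder p t) :
    IicEnumeratedBefore p' a t ↔ IicEnumeratedBefore p a t := by
  unfold IicEnumeratedBefore
  refine forall₂_congr fun j _ => exists_congr fun i => and_congr_right fun hi => ?_
  rw [h i hi]

lemma exists_iicEnumeratedBefore_iff (p : Baire) (a : ℕ) :
    (∃ t, IicEnumeratedBefore p a t) ↔ Iic a ⊆ rangeM p := by
  constructor
  · rintro ⟨t, ht⟩ j hj
    obtain ⟨i, -, hi⟩ := ht j hj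
    exact ⟨i, hi⟩
  · intro h
    have : ∀ᶠ t in atTop, ∀ j ∈ Iic a, ∃ i < t, p i = j + 1 :=
      (finite_Iic a).eventually_all.2 fun j hj => by
        obtain ⟨i, hi⟩ := h hj
        exact eventually_atTop.2 ⟨i + 1, fun t ht => ⟨i, by omega, hi⟩⟩
    exact this.exists

lemma mem_iff_of_encard_compl_le_one {A : Set ℕ} (hA : Aᶜ.encard ≤ 1) (n : ℕ) :
    n ∈ A ↔ Iic n ⊆ A ∨ (0 < n ∧ ¬ Iic (n - 1) ⊆ A) := by
  rcases encard_le_one_iff_eq.1 hA with h | ⟨m, h⟩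
  · rw [compl_empty_iff] at h
    simp [h]
  · rw [← compl_compl A, h]
    simp only [mem_compl_iff, mem_singleton_iff, subset_compl_singleton_iff, mem_Iic]
    omega

def ecOfSort (r : Baire) : Baire :=
  fun n => if psnd r n = 0 ∨ (0 < n ∧ psnd r (n - 1) ≠ 0) then 1 else 0

lemma EC1_le_SORT : WRed EC1 SORT := by
  refine ⟨univ, univ, fun p => firstStages (IicEnumeratedBefore p), ecOfSort, ?_, ?_, ?_⟩
  · refine Continuous.continuousOn <|
      continuous_of_forall_cylinder fun p m => ⟨m.unpair.2 + 1, fun p' hp' => ?_⟩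
    unfold firstStages
    rw [iicEnumeratedBefore_congr hp',
      iicEnumeratedBefore_congr (cylinder_anti _ (Nat.le_succ _) hp')]
  · refine Continuous.continuousOn <|
      continuous_of_forall_cylinder fun r n => ⟨2 * n + 2, fun r' hr' => ?_⟩
    have h₁ : psnd r' n = psnd r n := hr' _ (by omega)
    have h₂ : psnd r' (n - 1) = psnd r (n - 1) := hr' _ (by omega)
    simp only [ecOfSort, h₁, h₂]
  · intro p hp
    refine ⟨trivial, firstStages_le_one _, fun q hq => ⟨trivial, ?_⟩⟩
    have hq : q = sortOut (firstStages (IicEnumeratedBefore p)) := hq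
    have hq₀ : ∀ k, q k = 0 ↔ Iic k ⊆ rangeM p := fun k => by
      rw [hq, sortOut_firstStages (iicEnumeratedBefore_mono p) (not_iicEnumeratedBefore_zero p)
        (fun _ _ hba ⟨t, ht⟩ => ⟨t, fun j hj => ht j (hj.trans hba)⟩),
        exists_iicEnumeratedBefore_iff]
    funext n
    unfold ecOfSort
    rw [psnd_pairB]
    classical
    simp only [Ne, hq₀, ← mem_iff_of_encard_compl_le_one hp]
    split_ifs with hn
    exacts [(chi_of_mem hn).symm, (chi_of_notMem hn).symm]

lemma zeroCount_congr {p p' : Baire} {t : ℕ} (h : p' ∈ cylinder p t) :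
    zeroCount p' t = zeroCount p t := by
  simp only [zeroCount, Nat.count_eq_card_filter_range]
  exact congrArg Finset.card (Finset.filter_congr fun i hi => by rw [h i (by simpa using hi)])

def IsFirstStageOfCount (p : Baire) (j t : ℕ) : Prop :=
  zeroCount p t = j ∧ ∀ s < t, zeroCount p s ≠ j

lemma isFirstStageOfCount_congr {p p' : Baire} {j t : ℕ} (h : p' ∈ cylinder p t) :
    IsFirstStageOfCount p' j t ↔ IsFirstStageOfCount p j t := by
  unfold IsFirstStageOfCount
  rw [zeroCount_congr h]
  refine and_congr_right fun _ => forall₂_congr fun s hs => ?_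
  rw [zeroCount_congr (cylinder_anti _ hs.le h)]

lemma exists_isFirstStageOfCount {p : Baire} {k : ℕ} (h : ∀ t, zeroCount p t ≤ k) :
    ∃ j t, IsFirstStageOfCount p j t ∧ ∀ s, zeroCount p s ≤ j := by
  classical
  have hbdd : BddAbove (range (zeroCount p)) := ⟨k, forall_mem_range.2 h⟩
  obtain ⟨t₀, ht₀⟩ := Nat.sSup_mem (range_nonempty (zeroCount p)) hbdd
  have hex : ∃ t, zeroCount p t = sSup (range (zeroCount p)) := ⟨t₀, ht₀⟩
  exact ⟨_, Nat.find hex, ⟨Nat.find_spec hex, fun s hs => Nat.find_min hex hs⟩,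
    fun s => le_csSup hbdd (mem_range_self s)⟩

/-- Enumerates every pair `⟨j, t⟩` except the one where `j` is the final number of zeros of `p`
and `t` the stage at which it is reached. -/
noncomputable def countCode (p : Baire) : Baire :=
  enumOf fun a s => ¬ IsFirstStageOfCount p a.unpair.1 a.unpair.2 ∨ a.unpair.1 < zeroCount p s

lemma notMem_rangeM_countCode (p : Baire) (a : ℕ) :
    a ∉ rangeM (countCode p) ↔
      IsFirstStageOfCount p a.unpair.1 a.unpair.2 ∧ ∀ s, zeroCount p s ≤ a.unpair.1 := by
  simp only [countCode, rangeM_enumOf, mem_ofPred_eq, not_exists, not_or, not_not, not_lt]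
  exact ⟨fun h => ⟨(h 0).1, fun s => (h s).2⟩, fun h s => ⟨h.1, h.2 s⟩⟩

lemma encard_compl_rangeM_countCode_le_one (p : Baire) :
    (rangeM (countCode p))ᶜ.encard ≤ 1 := by
  rw [encard_le_one_iff]
  intro a b ha hb
  rw [mem_compl_iff, notMem_rangeM_countCode] at ha hb
  obtain ⟨⟨ha₁, ha₂⟩, ha₃⟩ := ha
  obtain ⟨⟨hb₁, hb₂⟩, hb₃⟩ := hb
  have hj : a.unpair.1 = b.unpair.1 := by
    have := ha₃ b.unpair.2
    have := hb₃ a.unpair.2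
    omega
  have ht : a.unpair.2 = b.unpair.2 := by
    by_contra hne
    rcases Nat.lt_or_gt_of_ne hne with h | h
    · exact hb₂ _ h (ha₁.trans hj)
    · exact ha₂ _ h (hb₁.trans hj.symm)
  rw [← Nat.pair_unpair a, ← Nat.pair_unpair b, hj, ht]

lemma continuous_countCode : Continuous countCode :=
  continuous_enumOf fun a s => ⟨max a.unpair.2 s, fun p p' hp' => by
    rw [isFirstStageOfCount_congr (cylinder_anti _ (le_max_left _ _) hp'),
      zeroCount_congr (cylinder_anti _ (le_max_right _ _) hp')]⟩

lemma continuousOn_sortOut_pfst :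
    ContinuousOn (fun r => sortOut (pfst r)) {r | psnd r = chi (rangeM (countCode (pfst r)))} := by
  classical
  refine continuousOn_of_forall_cylinder fun r hr k => ?_
  simp only [sortOut_eq_ite_count]
  by_cases h : ∃ t, k < zeroCount (pfst r) t
  · obtain ⟨t, ht⟩ := h
    refine ⟨2 * t, fun r' _ hr' => ?_⟩
    have hcount := zeroCount_congr (pfst_mem_cylinder hr')
    rw [if_pos ⟨t, hcount ▸ ht⟩, if_pos ⟨t, ht⟩]
  · simp only [not_exists, not_lt] at h
    have hr : psnd r = chi (rangeM (countCode (pfst r))) := hr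
    obtain ⟨j, t, hfirst, hmax⟩ := exists_isFirstStageOfCount h
    -- the answer to the `EC₁` instance certifies that the count of zeros never exceeds `j`
    refine ⟨2 * Nat.pair j t + 2, fun r' hr'S hr' => ?_⟩
    have hr'S : psnd r' = chi (rangeM (countCode (pfst r'))) := hr'S
    have hnot : Nat.pair j t ∉ rangeM (countCode (pfst r')) := by
      rw [← chi_eq_zero_iff, ← congrFun hr'S,
        show psnd r' (Nat.pair j t) = psnd r (Nat.pair j t) from hr' _ (by omega),
        congrFun hr, chi_eq_zero_iff, notMem_rangeM_countCode, Nat.unpair_pair]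
      exact ⟨hfirst, hmax⟩
    rw [notMem_rangeM_countCode, Nat.unpair_pair] at hnot
    have hjk : j ≤ k := hfirst.1 ▸ h t
    rw [if_neg (by simpa using fun s => (hnot.2 s).trans hjk), if_neg (by simpa using h)]

lemma SORT_le_EC1 : WRed SORT EC1 := by
  refine ⟨univ, _, countCode, fun r => sortOut (pfst r), continuous_countCode.continuousOn,
    continuousOn_sortOut_pfst, fun p _ => ⟨trivial, encard_compl_rangeM_countCode_le_one p,
      fun q hq => ?_⟩⟩
  have hq : q = chi (rangeM (countCode p)) := hq
  refine ⟨?_, ?_⟩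
  · simp [pfst_pairB, psnd_pairB, hq]
  · simp [pfst_pairB, SORT]

/-! ### Binary words and Cantor space -/

lemma wordCode_injective : Function.Injective wordCode := by
  intro w v h
  induction w generalizing v with
  | nil =>
    cases v with
    | nil => rfl
    | cons b v => simp only [wordCode] at h; split at h <;> omega
  | cons b w ih =>
    cases v with
    | nil => simp only [wordCode] at h; split at h <;> omega
    | cons b' v =>
      simp only [wordCode] at h
      have hb : b = b' := by cases b <;> cases b' <;> simp at h ⊢ <;> omega
      subst hb
      rw [@ih v (by omega)]

lemma wordCode_surjective : Function.Surjective wordCode := by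
  intro n
  induction n using Nat.strong_induction_on with
  | _ n ih =>
    rcases n with _ | n
    · exact ⟨[], rfl⟩
    · obtain ⟨k, rfl | rfl⟩ := Nat.even_or_odd' n
      · obtain ⟨w, hw⟩ := ih k (by omega)
        exact ⟨false :: w, by simp [wordCode, hw]⟩
      · obtain ⟨w, hw⟩ := ih k (by omega)
        exact ⟨true :: w, by simp [wordCode, hw]⟩

@[simp] lemma prefixList_length (x : Baire) (k : ℕ) : (prefixList x k).length = k := by
  simp [prefixList]

lemma prefixList_succ (x : Baire) (k : ℕ) :
    prefixList x (k + 1) = prefixList x k ++ [decide (x k = 1)] := by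
  simp [prefixList, List.range_succ]

lemma prefixList_take (x : Baire) {j k : ℕ} (h : j ≤ k) :
    (prefixList x k).take j = prefixList x j := by
  simp [prefixList, ← List.map_take, List.take_range, h]

lemma prefixList_congr {x y : Baire} {k : ℕ} (h : y ∈ cylinder x k) :
    prefixList y k = prefixList x k :=
  List.map_congr_left fun i hi => by rw [h i (List.mem_range.1 hi)]

lemma exists_prefixList_eq (w : List Bool) :
    ∃ x : Baire, (∀ n, x n ≤ 1) ∧ prefixList x w.length = w := by
  refine ⟨fun i => if w.getD i false then 1 else 0, fun n => by dsimp only; split <;> omega, ?_⟩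
  refine List.ext_getElem (by simp) fun i _ h => ?_
  simp only [prefixList, List.getElem_map, List.getElem_range, List.getD_eq_getElem _ _ h]
  cases w[i] <;> simp

lemma isOpen_setOf_prefixList (k : ℕ) (P : List Bool → Prop) :
    IsOpen {x : Baire | P (prefixList x k)} :=
  isOpen_iff_mem_nhds.2 fun x hx =>
    mem_of_superset ((isOpen_cylinder _ x k).mem_nhds (self_mem_cylinder x k)) fun y hy => by
      simpa [prefixList_congr hy] using hx

lemma isClosed_setOf_prefixList (k : ℕ) (P : List Bool → Prop) :
    IsClosed {x : Baire | P (prefixList x k)} := by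
  simpa [compl_ofPred] using (isOpen_setOf_prefixList k fun w => ¬ P w).isClosed_compl

lemma isCompact_binary : IsCompact {x : Baire | ∀ n, x n ≤ 1} := by
  simpa [Set.pi] using isCompact_univ_pi (X := fun _ : ℕ => ℕ) fun _ => (finite_Iic 1).isCompact

/-! ### `SEP₁ ≤ EC₁` and `SEP₁ ≤ C_{#≤2}` -/

-- For `s = ⟨r, χ_{P ∪ Q}⟩`, the parity of the first position of `n + 1` in `r` tells whether
-- `n ∈ P` or `n ∈ Q`.
open Classical in
noncomputable def sepOfEC (s : Baire) : Baire := fun n =>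
  if h : psnd s n = 1 ∧ ∃ i, pfst s i = n + 1 then (if Even (Nat.find h.2) then 1 else 0) else 1

lemma sepOfEC_pairB {r : Baire} (hr : Disjoint (rangeM (pfst r)) (rangeM (psnd r))) :
    sepOfEC (pairB r (chi (rangeM r))) = chi (rangeM (psnd r))ᶜ := by
  classical
  funext n
  set s := pairB r (chi (rangeM r))
  have hfst : pfst s = r := pfst_pairB _ _
  have hsnd : psnd s = chi (rangeM r) := psnd_pairB _ _
  by_cases hn : n ∈ rangeM r
  · have hdom : psnd s n = 1 ∧ ∃ i, pfst s i = n + 1 := by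
      rw [hfst, hsnd, chi_eq_one_iff]
      exact ⟨hn, hn⟩
    have hfirst : r (Nat.find hdom.2) = n + 1 := hfst ▸ Nat.find_spec hdom.2
    rw [sepOfEC, dif_pos hdom]
    obtain ⟨j, hj | hj⟩ := Nat.even_or_odd' (Nat.find hdom.2)
    · have hP : n ∈ rangeM (pfst r) := ⟨j, by rw [pfst, ← hj]; exact hfirst⟩
      rw [if_pos ⟨j, by omega⟩, chi_of_mem (hr.subset_compl_right hP)]
    · have hQ : n ∈ rangeM (psnd r) := ⟨j, by rw [psnd, ← hj]; exact hfirst⟩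
      rw [if_neg (Nat.not_even_iff_odd.2 ⟨j, hj⟩), chi_of_notMem (not_not.2 hQ)]
  · have hQ : n ∉ rangeM (psnd r) := fun h => hn ((rangeM_eq_union r).symm ▸ Or.inr h)
    rw [sepOfEC, dif_neg (by rw [hsnd, chi_eq_one_iff]; exact fun h => hn h.1), chi_of_mem hQ]

lemma continuousOn_sepOfEC : ContinuousOn sepOfEC {s | psnd s = chi (rangeM (pfst s))} := by
  classical
  refine continuousOn_of_forall_cylinder fun s hs n => ?_
  by_cases h : psnd s n = 1
  · have hex : ∃ i, pfst s i = n + 1 := chi_eq_one_iff.1 ((congrFun hs n).symm.trans h)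
    refine ⟨2 * (Nat.find hex + 1) + 2 * n + 2, fun s' _ hs' => ?_⟩
    have h' : psnd s' n = 1 := (hs' (2 * n + 1) (by omega)).trans h
    have hcyl : pfst s' ∈ cylinder (pfst s) (Nat.find hex + 1) :=
      pfst_mem_cylinder (cylinder_anti _ (by omega) hs')
    have hex' : ∃ i, pfst s' i = n + 1 :=
      ⟨_, (hcyl _ (Nat.lt_succ_self _)).trans (Nat.find_spec hex)⟩
    have hfind : Nat.find hex' = Nat.find hex :=
      (Nat.find_eq_iff hex').2 ⟨(hcyl _ (Nat.lt_succ_self _)).trans (Nat.find_spec hex),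
        fun i hi => by rw [hcyl i (by omega)]; exact Nat.find_min hex hi⟩
    rw [sepOfEC, sepOfEC, dif_pos (⟨h', hex'⟩ : _ ∧ _), dif_pos (⟨h, hex⟩ : _ ∧ _),
      hfind]
  · refine ⟨2 * n + 2, fun s' _ hs' => ?_⟩
    have h' : ¬ psnd s' n = 1 := by rwa [show psnd s' n = psnd s n from hs' _ (by omega)]
    rw [sepOfEC, sepOfEC, dif_neg (by tauto), dif_neg (by tauto)]

lemma SEP1_le_EC1 : WRed SEP1 EC1 := by
  refine ⟨univ, _, id, sepOfEC, continuousOn_id, continuousOn_sepOfEC,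
    fun r ⟨hdisj, hfree⟩ => ⟨trivial, ?_, fun q hq => ?_⟩⟩
  · show (rangeM r)ᶜ.encard ≤ 1
    rwa [rangeM_eq_union]
  · have hq : q = chi (rangeM r) := hq
    subst hq
    rw [← disjoint_iff_inter_eq_empty] at hdisj
    exact ⟨by simp [pfst_pairB, psnd_pairB], _, sepOfEC_pairB hdisj, hdisj.subset_compl_right,
      subset_rfl⟩

noncomputable def sepTreeCode (r : Baire) : Baire :=
  enumOf fun a i =>
    ∃ w b, wordCode (w ++ [b]) = a ∧ (if b then psnd r else pfst r) i = w.length + 1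

lemma continuous_sepTreeCode : Continuous sepTreeCode :=
  continuous_enumOf fun _ i => ⟨2 * i + 2, fun p p' hp' => by
    have : ∀ b : Bool, (if b then psnd p' else pfst p') i = (if b then psnd p else pfst p) i := by
      intro b
      cases b
      exacts [hp' (2 * i) (by omega), hp' (2 * i + 1) (by omega)]
    simp only [this]⟩

lemma wordCode_nil_notMem_rangeM_sepTreeCode (r : Baire) :
    wordCode [] ∉ rangeM (sepTreeCode r) := by
  rw [sepTreeCode, rangeM_enumOf]
  rintro ⟨_, w, b, h, -⟩
  simpa using wordCode_injective h

lemma wordCode_prefixList_succ_mem_rangeM_sepTreeCode_iff (r x : Baire) (k : ℕ) :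
    wordCode (prefixList x (k + 1)) ∈ rangeM (sepTreeCode r) ↔
      if x k = 1 then k ∈ rangeM (psnd r) else k ∈ rangeM (pfst r) := by
  rw [sepTreeCode, rangeM_enumOf, prefixList_succ]
  constructor
  · rintro ⟨i, w, b, h, hi⟩
    obtain ⟨rfl, hb⟩ := List.append_inj' (wordCode_injective h) rfl
    obtain rfl : b = decide (x k = 1) := by simpa using hb
    by_cases hx : x k = 1 <;> simp_all <;> exact ⟨i, by simpa using hi⟩
  · intro h
    by_cases hx : x k = 1
    · obtain ⟨i, hi⟩ := (if_pos hx).symm ▸ h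
      exact ⟨i, prefixList x k, true, by simp [hx], by simpa using hi⟩
    · obtain ⟨i, hi⟩ := (if_neg hx).symm ▸ h
      exact ⟨i, prefixList x k, false, by simp [hx], by simpa using hi⟩

lemma Ap_sepTreeCode (r : Baire) : Ap (sepTreeCode r) = SEP.sol r := by
  ext x
  constructor
  · rintro ⟨hbin, hgood⟩
    have h := fun k =>
      (wordCode_prefixList_succ_mem_rangeM_sepTreeCode_iff r x k).not.1 (hgood (k + 1))
    refine ⟨{k | x k = 1}, eq_chi_of_le_one hbin, fun k hk => ?_, fun k hk hkQ => ?_⟩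
    · by_contra hx
      exact h k (by rw [if_neg (show ¬ x k = 1 from hx)]; exact hk)
    · exact h k (by rw [if_pos (show x k = 1 from hk)]; exact hkQ)
  · rintro ⟨A, rfl, hPA, hAQ⟩
    refine ⟨chi_le_one A, fun k => ?_⟩
    cases k with
    | zero => exact wordCode_nil_notMem_rangeM_sepTreeCode r
    | succ k =>
      rw [wordCode_prefixList_succ_mem_rangeM_sepTreeCode_iff]
      by_cases hk : k ∈ A
      · rw [if_pos (chi_of_mem hk)]
        exact hAQ hk
      · rw [if_neg (by rw [chi_of_notMem hk]; omega)]
        exact fun hP => hk (hPA hP)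

lemma SEP_sol_subset_pair {r : Baire} {m : ℕ}
    (hm : (rangeM (pfst r) ∪ rangeM (psnd r))ᶜ ⊆ {m}) :
    SEP.sol r ⊆ {chi (rangeM (pfst r)), chi (insert m (rangeM (pfst r)))} := by
  rintro _ ⟨A, rfl, hPA, hAQ⟩
  have hA : ∀ k ≠ m, k ∈ A → k ∈ rangeM (pfst r) := fun k hk hkA => by
    by_contra hkP
    exact hk (hm fun h => h.elim hkP (hAQ hkA))
  by_cases hmA : m ∈ A
  · refine Or.inr (congrArg chi (subset_antisymm (fun k hk => ?_) (insert_subset hmA hPA)))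
    by_cases hkm : k = m
    exacts [Or.inl hkm, Or.inr (hA k hkm hk)]
  · refine Or.inl (congrArg chi (subset_antisymm (fun k hk => ?_) hPA))
    exact hA k (fun hkm => hmA (hkm ▸ hk)) hk

lemma SEP1_le_Cle2 : WRed SEP1 Cle2 := by
  refine ⟨univ, univ, sepTreeCode, psnd, continuous_sepTreeCode.continuousOn,
    continuous_psnd.continuousOn,
    fun r ⟨hdisj, hfree⟩ => ⟨trivial, ⟨?_, ?_⟩, fun q hq => ?_⟩⟩
  · rw [← disjoint_iff_inter_eq_empty] at hdisj
    rw [Ap_sepTreeCode]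
    exact ⟨_, _, rfl, subset_rfl, hdisj.subset_compl_right⟩
  · obtain ⟨m, hm⟩ : ∃ m, (rangeM (pfst r) ∪ rangeM (psnd r))ᶜ ⊆ {m} := by
      rcases encard_le_one_iff_eq.1 hfree with h | ⟨m, h⟩
      exacts [⟨0, h.subset.trans (empty_subset _)⟩, ⟨m, h.subset⟩]
    calc (Ap (sepTreeCode r)).encard
        ≤ ({chi (rangeM (pfst r)), chi (insert m (rangeM (pfst r)))} : Set Baire).encard :=
          encard_le_encard ((Ap_sepTreeCode r).symm ▸ SEP_sol_subset_pair hm)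
      _ ≤ 2 := (encard_insert_le _ _).trans (by rw [encard_singleton]; norm_num)
  · rw [psnd_pairB]
    exact ⟨trivial, (Ap_sepTreeCode r) ▸ hq⟩

/-! ### `C_{#≤2} ≤ SEP₁` -/

lemma eq_or_eq_of_encard_le_two {α : Type*} {s : Set α} (hs : s.encard ≤ 2) {a b c : α}
    (ha : a ∈ s) (hb : b ∈ s) (hc : c ∈ s) (hab : a ≠ b) : c = a ∨ c = b := by
  by_contra! hc'
  have h3 : ({a, b, c} : Set α).encard = 3 :=
    encard_eq_three.2 ⟨a, b, c, hab, hc'.1.symm, hc'.2.symm, rfl⟩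
  have h3le := encard_le_encard (insert_subset ha (insert_subset hb (singleton_subset_iff.2 hc)))
  rw [h3] at h3le
  exact absurd (h3le.trans hs) (by norm_num)

def Extendible (p : Baire) (w : List Bool) : Prop := ∃ x ∈ Ap p, prefixList x w.length = w

lemma Extendible.wordCode_notMem {p : Baire} {w : List Bool} (h : Extendible p w) :
    wordCode w ∉ rangeM p := by
  obtain ⟨x, hx, hxw⟩ := h
  rw [← hxw]
  exact hx.2 _

lemma Extendible.exists_append {p : Baire} {w : List Bool} (h : Extendible p w) :
    ∃ b, Extendible p (w ++ [b]) := by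
  obtain ⟨x, hx, hxw⟩ := h
  exact ⟨decide (x w.length = 1), x, hx, by
    rw [List.length_append, List.length_singleton, prefixList_succ, hxw]⟩

def DeadBy (p : Baire) (w : List Bool) (t : ℕ) : Prop :=
  ∀ x : Baire, (∀ n, x n ≤ 1) → prefixList x w.length = w →
    ∃ k, ∃ i < t, p i = wordCode (prefixList x k) + 1

lemma DeadBy.mono {p : Baire} {w : List Bool} {s t : ℕ} (hst : s ≤ t) (h : DeadBy p w s) :
    DeadBy p w t :=
  fun x hx hxw => (h x hx hxw).imp fun _ ⟨i, hi, hpi⟩ => ⟨i, hi.trans_le hst, hpi⟩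

lemma not_deadBy_zero (p : Baire) (w : List Bool) : ¬ DeadBy p w 0 := fun h => by
  obtain ⟨x, hx, hxw⟩ := exists_prefixList_eq w
  obtain ⟨_, i, hi, -⟩ := h x hx hxw
  exact Nat.not_lt_zero i hi

lemma deadBy_congr {p p' : Baire} {w : List Bool} {t : ℕ} (h : p' ∈ cylinder p t) :
    DeadBy p' w t ↔ DeadBy p w t := by
  unfold DeadBy
  refine forall₃_congr fun x _ _ => exists_congr fun k => exists_congr fun i => ?_
  exact and_congr_right fun hi => by rw [h i hi]

lemma exists_deadBy_iff (p : Baire) (w : List Bool) :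
    (∃ t, DeadBy p w t) ↔ ¬ Extendible p w := by
  constructor
  · rintro ⟨t, ht⟩ ⟨x, hx, hxw⟩
    obtain ⟨k, i, -, hi⟩ := ht x hx.1 hxw
    exact hx.2 k ⟨i, hi⟩
  · intro hw
    -- compactness: the binary sequences through `w` are covered by the increasing open `U t`
    let U : ℕ → Set Baire :=
      fun t => {x | ∃ k, ∃ i < t, p i = wordCode (prefixList x k) + 1}
    have hU : ∀ t, IsOpen (U t) := fun t => by
      simp only [U]
      rw [ofPred_exists]
      exact isOpen_iUnion fun k =>
        isOpen_setOf_prefixList k fun u => ∃ i < t, p i = wordCode u + 1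
    let C : Set Baire := {x | ∀ n, x n ≤ 1} ∩ {x | prefixList x w.length = w}
    have hcover : C ⊆ ⋃ t, U t := by
      rintro x ⟨hx, hxw⟩
      obtain ⟨k, i, hi⟩ : ∃ k, wordCode (prefixList x k) ∈ rangeM p := by
        by_contra! h
        exact hw ⟨x, ⟨hx, h⟩, hxw⟩
      exact mem_iUnion.2 ⟨i + 1, k, i, Nat.lt_succ_self i, hi⟩
    have hmono : Monotone U := fun s t hst x ⟨k, i, hi, h⟩ => ⟨k, i, hi.trans_le hst, h⟩
    have hC : IsCompact C := isCompact_binary.inter_right (isClosed_setOf_prefixList _ (· = w))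
    obtain ⟨t, ht⟩ := hC.elim_directed_cover U hU hcover hmono.directed_le
    exact ⟨t, fun x hx hxw => ht ⟨hx, hxw⟩⟩

def SplitsAt (x y : Baire) (n : ℕ) : Prop :=
  prefixList x n = prefixList y n ∧ prefixList x (n + 1) ≠ prefixList y (n + 1)

lemma SplitsAt.symm {x y : Baire} {n : ℕ} (h : SplitsAt x y n) : SplitsAt y x n :=
  ⟨h.1.symm, h.2.symm⟩

lemma SplitsAt.ne {x y : Baire} {n : ℕ} (h : SplitsAt x y n) : x ≠ y :=
  fun hxy => h.2 (hxy ▸ rfl)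

lemma SplitsAt.eq {x y : Baire} {n m : ℕ} (hn : SplitsAt x y n) (hm : SplitsAt x y m) :
    n = m := by
  have key : ∀ {n m}, SplitsAt x y n → SplitsAt x y m → ¬ n < m := fun hn hm h => hn.2 <| by
    rw [← prefixList_take x h, hm.1, prefixList_take y h]
  exact le_antisymm (not_lt.1 (key hm hn)) (not_lt.1 (key hn hm))

def IsSplitNode (p : Baire) (w : List Bool) : Prop :=
  Extendible p (w ++ [false]) ∧ Extendible p (w ++ [true])

lemma IsSplitNode.exists_splitsAt {p : Baire} {w : List Bool} (h : IsSplitNode p w) :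
    ∃ x₀ ∈ Ap p, ∃ x₁ ∈ Ap p,
      SplitsAt x₀ x₁ w.length ∧ prefixList x₀ w.length = w := by
  obtain ⟨⟨x₀, hx₀, h₀⟩, ⟨x₁, hx₁, h₁⟩⟩ := h
  simp only [List.length_append, List.length_singleton] at h₀ h₁
  have hw₀ : prefixList x₀ w.length = w := by
    rw [← prefixList_take x₀ (Nat.le_succ _), h₀, List.take_left]
  have hw₁ : prefixList x₁ w.length = w := by
    rw [← prefixList_take x₁ (Nat.le_succ _), h₁, List.take_left]
  exact ⟨x₀, hx₀, x₁, hx₁, ⟨hw₀.trans hw₁.symm, by simp [h₀, h₁]⟩, hw₀⟩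

/-- Each split node yields two elements of `A_p` that split there; with at most two elements
both split nodes yield the same pair. -/
lemma IsSplitNode.eq {p : Baire} (hp : (Ap p).encard ≤ 2) {w w' : List Bool}
    (hw : IsSplitNode p w) (hw' : IsSplitNode p w') : w = w' := by
  obtain ⟨x₀, hx₀, x₁, hx₁, hx, hxw⟩ := hw.exists_splitsAt
  obtain ⟨y₀, hy₀, y₁, hy₁, hy, hyw⟩ := hw'.exists_splitsAt
  have key : SplitsAt x₀ x₁ w'.length ∧ prefixList x₀ w'.length = w' := by
    rcases eq_or_eq_of_encard_le_two hp hx₀ hx₁ hy₀ hx.ne with rfl | rfl <;>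
      rcases eq_or_eq_of_encard_le_two hp hx₀ hx₁ hy₁ hx.ne with rfl | rfl
    · exact absurd rfl hy.ne
    · exact ⟨hy, hyw⟩
    · exact ⟨hy.symm, hy.1.symm.trans hyw⟩
    · exact absurd rfl hy.ne
  rw [← hxw, ← key.2, hx.eq key.1]

noncomputable def wordEnumOf (P : List Bool → ℕ → Prop) : Baire :=
  enumOf fun a t => ∃ w, wordCode w = a ∧ P w t

lemma wordCode_mem_rangeM_wordEnumOf_iff (P : List Bool → ℕ → Prop) (w : List Bool) :
    wordCode w ∈ rangeM (wordEnumOf P) ↔ ∃ t, P w t := by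
  simp only [wordEnumOf, rangeM_enumOf, mem_ofPred_eq]
  exact exists_congr fun t =>
    ⟨fun ⟨v, hv, h⟩ => wordCode_injective hv ▸ h, fun h => ⟨w, rfl, h⟩⟩

lemma continuous_wordEnumOf {P : Baire → List Bool → ℕ → Prop}
    (hP : ∀ t, ∃ N, ∀ p, ∀ p' ∈ cylinder p N, ∀ w, (P p' w t ↔ P p w t)) :
    Continuous fun p => wordEnumOf (P p) :=
  continuous_enumOf fun _ t => (hP t).imp fun _ hN p p' hp' =>
    exists_congr fun w => and_congr_right fun _ => hN p p' hp' w

def LeftDiesFirst (p : Baire) (w : List Bool) (t : ℕ) : Prop :=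
  DeadBy p (w ++ [false]) t ∧ ¬ DeadBy p (w ++ [true]) t

def RightDiesNoLater (p : Baire) (w : List Bool) (t : ℕ) : Prop :=
  DeadBy p (w ++ [true]) (t + 1) ∧ ¬ DeadBy p (w ++ [false]) t

lemma not_leftDiesFirst_and_rightDiesNoLater {p : Baire} {w : List Bool} {t s : ℕ}
    (ht : LeftDiesFirst p w t) (hs : RightDiesNoLater p w s) : False := by
  rcases Nat.lt_or_ge s t with h | h
  · exact ht.2 (hs.1.mono h)
  · exact hs.2 (ht.1.mono h)

lemma isSplitNode_of_forall_not {p : Baire} {w : List Bool}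
    (hL : ∀ t, ¬ LeftDiesFirst p w t) (hR : ∀ t, ¬ RightDiesNoLater p w t) :
    IsSplitNode p w := by
  simp only [LeftDiesFirst, RightDiesNoLater, not_and, not_not] at hL hR
  have h₁ : ∀ t, ¬ DeadBy p (w ++ [true]) t := by
    intro t
    induction t with
    | zero => exact not_deadBy_zero p _
    | succ t ih => exact fun h => ih (hL t (hR t h))
  have h₀ : ∀ t, ¬ DeadBy p (w ++ [false]) t := fun t h => h₁ t (hL t h)
  rw [IsSplitNode, ← not_not (a := Extendible p (w ++ [false])),
    ← not_not (a := Extendible p (w ++ [true])), ← exists_deadBy_iff, ← exists_deadBy_iff]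
  exact ⟨not_exists.2 h₀, not_exists.2 h₁⟩

lemma exists_leftDiesFirst {p : Baire} {w : List Bool} (h₀ : ¬ Extendible p (w ++ [false]))
    (h₁ : Extendible p (w ++ [true])) : ∃ t, LeftDiesFirst p w t := by
  obtain ⟨t, ht⟩ := (exists_deadBy_iff p _).2 h₀
  exact ⟨t, ht, fun h => (exists_deadBy_iff p _).1 ⟨t, h⟩ h₁⟩

lemma exists_rightDiesNoLater {p : Baire} {w : List Bool} (h₀ : Extendible p (w ++ [false]))
    (h₁ : ¬ Extendible p (w ++ [true])) : ∃ t, RightDiesNoLater p w t := by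
  obtain ⟨t, ht⟩ := (exists_deadBy_iff p _).2 h₁
  exact ⟨t, ht.mono (Nat.le_succ t), fun h => (exists_deadBy_iff p _).1 ⟨t, h⟩ h₀⟩

noncomputable def splitTreeCode (p : Baire) : Baire :=
  pairB (wordEnumOf (LeftDiesFirst p)) (wordEnumOf (RightDiesNoLater p))

lemma continuous_splitTreeCode : Continuous splitTreeCode := by
  have hL := continuous_wordEnumOf (P := LeftDiesFirst) fun t => ⟨t, fun p p' hp' w => by
    simp only [LeftDiesFirst, deadBy_congr hp']⟩
  have hR := continuous_wordEnumOf (P := RightDiesNoLater) fun t => ⟨t + 1, fun p p' hp' w => by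
    simp only [RightDiesNoLater, deadBy_congr hp', deadBy_congr (cylinder_anti _ t.le_succ hp')]⟩
  exact continuous_pairB.comp (hL.prodMk hR)

lemma splitTreeCode_mem_SEP1_dom {p : Baire} (hp : (Ap p).encard ≤ 2) :
    splitTreeCode p ∈ SEP1.dom := by
  simp only [SEP1, splitTreeCode, pfst_pairB, psnd_pairB, mem_ofPred_eq]
  constructor
  · refine eq_empty_of_forall_notMem fun a ⟨hL, hR⟩ => ?_
    obtain ⟨w, rfl⟩ := wordCode_surjective a
    obtain ⟨t, ht⟩ := (wordCode_mem_rangeM_wordEnumOf_iff _ w).1 hL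
    obtain ⟨s, hs⟩ := (wordCode_mem_rangeM_wordEnumOf_iff _ w).1 hR
    exact not_leftDiesFirst_and_rightDiesNoLater ht hs
  · have hsplit : ∀ w, wordCode w ∉ rangeM (wordEnumOf (LeftDiesFirst p)) ∪
        rangeM (wordEnumOf (RightDiesNoLater p)) → IsSplitNode p w := fun w hw => by
      simp only [mem_union, wordCode_mem_rangeM_wordEnumOf_iff, not_or, not_exists] at hw
      exact isSplitNode_of_forall_not hw.1 hw.2
    refine encard_le_one_iff.2 fun a b ha hb => ?_
    obtain ⟨w, rfl⟩ := wordCode_surjective a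
    obtain ⟨w', rfl⟩ := wordCode_surjective b
    rw [(hsplit w ha).eq hp (hsplit w' hb)]

def followBits (q : Baire) : ℕ → List Bool
  | 0 => []
  | j + 1 => followBits q j ++ [decide (q (wordCode (followBits q j)) = 1)]

def followSeq (q : Baire) : Baire := fun k => if q (wordCode (followBits q k)) = 1 then 1 else 0

lemma prefixList_followSeq (q : Baire) (k : ℕ) : prefixList (followSeq q) k = followBits q k := by
  induction k with
  | zero => rfl
  | succ k ih => simp [prefixList_succ, ih, followBits, followSeq]

lemma continuous_followSeq : Continuous followSeq := by
  refine continuous_of_forall_cylinder fun q k =>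
    ⟨(Finset.range (k + 1)).sup (fun j => wordCode (followBits q j)) + 1, fun q' hq' => ?_⟩
  have hq : ∀ j ≤ k, q' (wordCode (followBits q j)) = q (wordCode (followBits q j)) :=
    fun j hj => hq' _ (Nat.lt_succ_of_le
      (Finset.le_sup (f := fun j => wordCode (followBits q j)) (Finset.mem_range.2 (by omega))))
  have hbits : ∀ j ≤ k, followBits q' j = followBits q j := by
    intro j hj
    induction j with
    | zero => rfl
    | succ j ih => rw [followBits, followBits, ih (by omega), hq j (by omega)]
  simp only [followSeq, hbits k le_rfl, hq k le_rfl]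

lemma followSeq_mem_Ap {p q : Baire} (hp : (Ap p).Nonempty)
    (hq : q ∈ SEP.sol (splitTreeCode p)) : followSeq q ∈ Ap p := by
  obtain ⟨A, rfl, hLA, hAR⟩ := hq
  simp only [splitTreeCode, pfst_pairB, psnd_pairB] at hLA hAR
  have hext : ∀ j, Extendible p (followBits (chi A) j) := by
    intro j
    induction j with
    | zero =>
      obtain ⟨x, hx⟩ := hp
      exact ⟨x, hx, rfl⟩
    | succ j ih =>
      set w := followBits (chi A) j
      obtain ⟨b, hb⟩ := ih.exists_append
      rw [followBits]
      by_cases hw : chi A (wordCode w) = 1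
      · rw [decide_eq_true hw]
        by_contra h₁
        have h₀ : Extendible p (w ++ [false]) := by cases b <;> tauto
        exact hAR (chi_eq_one_iff.1 hw) ((wordCode_mem_rangeM_wordEnumOf_iff _ w).2
          (exists_rightDiesNoLater h₀ h₁))
      · rw [decide_eq_false hw]
        by_contra h₀
        have h₁ : Extendible p (w ++ [true]) := by cases b <;> tauto
        exact hw (chi_eq_one_iff.2 (hLA ((wordCode_mem_rangeM_wordEnumOf_iff _ w).2
          (exists_leftDiesFirst h₀ h₁))))
  refine ⟨fun n => by unfold followSeq; split <;> omega, fun k => ?_⟩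
  rw [prefixList_followSeq]
  exact (hext k).wordCode_notMem

lemma Cle2_le_SEP1 : WRed Cle2 SEP1 := by
  refine ⟨univ, univ, splitTreeCode, fun s => followSeq (psnd s),
    continuous_splitTreeCode.continuousOn,
    (continuous_followSeq.comp continuous_psnd).continuousOn,
    fun p ⟨hne, hp⟩ => ⟨trivial, splitTreeCode_mem_SEP1_dom hp, fun q hq => ⟨trivial, ?_⟩⟩⟩
  show followSeq (psnd (pairB p q)) ∈ Ap p
  rw [psnd_pairB]
  exact followSeq_mem_Ap hne hq

/-- `SEP₁ ≡_W C_{#≤2} ≤_W EC₁ ≡_W SORT`. -/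
theorem SEP1_Cle2_EC1_SORT : WEquiv SEP1 Cle2 ∧ WRed Cle2 EC1 ∧ WEquiv EC1 SORT :=
  ⟨⟨SEP1_le_Cle2, Cle2_le_SEP1⟩, Cle2_le_SEP1.trans SEP1_le_EC1,
    ⟨EC1_le_SORT, SORT_le_EC1⟩⟩
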